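/- Let U be a chain code all of whose prefixes have qturn in {-1, 0, 1} and with qturn(U) = 0, and let V be another such chain code. Then the concatenation U + V also has all prefixes with qturn in {-1, 0, 1}, qturn(U+V) = 0, and its unfolding dual path has pairwise distinct points. -/

import Mathlib

/-!
When every prefix has quarter-turn count in `{-1, 0, 1}`, the heading after a prefix is
up, right or left according as its count is `0`, `1` or `-1`. So the dual path never moves
down, and along a horizontal stretch the count stays at `1` or at `-1` (switching sign would
pass through `0`, an upward step), so the path moves strictly in one direction there.
Hence it never revisits a point.
-/

inductive TurnSym : Type
  | L | R | S
deriving DecidableEq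

def qt : TurnSym → ℤ
  | TurnSym.L => -1
  | TurnSym.R => 1
  | TurnSym.S => 0

def qturn (U : List TurnSym) : ℤ := (U.map qt).sum

def rot : TurnSym → ℤ × ℤ → ℤ × ℤ
  | TurnSym.R, d => (d.2, -d.1)
  | TurnSym.L, d => (-d.2, d.1)
  | TurnSym.S, d => d

def pathStep (s : (ℤ × ℤ) × (ℤ × ℤ)) (a : TurnSym) : (ℤ × ℤ) × (ℤ × ℤ) :=
  let d := rot a s.2
  (s.1 + d, d)

/-- Points p_0 = (0,0), p_1 = (0,1), ..., p_{n+1} of the unfolding dual path. -/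
def pts (U : List TurnSym) : List (ℤ × ℤ) :=
  (0, 0) :: (List.scanl pathStep ((0, 1), (0, 1)) U).map Prod.fst

/-- 90° clockwise rotation. -/
def cw (d : ℤ × ℤ) : ℤ × ℤ := (d.2, -d.1)

/-- Final heading after processing a chain code from initial heading (0,1). -/
def headAfter (U : List TurnSym) : ℤ × ℤ := U.foldl (fun d a => rot a d) (0, 1)

/-- Reflection of a chain code: swap L and R. -/
def reflCode (U : List TurnSym) : List TurnSym :=
  U.map fun a => match a with
    | TurnSym.L => TurnSym.R
    | TurnSym.R => TurnSym.L
    | TurnSym.S => TurnSym.S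

/-- Action of a chain code on an arbitrary initial heading. -/
def act (U : List TurnSym) (d : ℤ × ℤ) : ℤ × ℤ := U.foldl (fun d a => rot a d) d

/-- The heading `(0, 1)`, `(1, 0)`, `(-1, 0)` for quarter-turn count `0`, `1`, `-1`. -/
def dir (t : ℤ) : ℤ × ℤ := (t, 1 - t ^ 2)

def walk (t : ℕ → ℤ) : ℕ → ℤ × ℤ
  | 0 => 0
  | k + 1 => walk t k + dir (t k)

lemma Int.eq_of_sq_eq_one_of_abs_sub_le_one {a b : ℤ} (ha : a ^ 2 = 1) (hb : b ^ 2 = 1)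
    (hab : |a - b| ≤ 1) : a = b := by
  rw [sq_eq_one_iff] at ha hb
  rw [abs_le] at hab
  omega

section Walk

variable {t : ℕ → ℤ}

lemma walk_snd_monotone (ht : ∀ k, t k ∈ ({-1, 0, 1} : Set ℤ)) :
    Monotone fun k => (walk t k).2 :=
  monotone_nat_of_le_succ fun k => by
    obtain h | h | h : t k = -1 ∨ t k = 0 ∨ t k = 1 := ht k
    all_goals simp [walk, dir, h]

lemma sq_eq_one_of_walk_snd_eq (ht : ∀ k, t k ∈ ({-1, 0, 1} : Set ℤ)) {i j k : ℕ}
    (hik : i ≤ k) (hkj : k < j) (hy : (walk t i).2 = (walk t j).2) : t k ^ 2 = 1 := by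
  have h₁ := walk_snd_monotone ht hik
  have h₂ := walk_snd_monotone ht hkj
  have h₃ := walk_snd_monotone ht k.le_succ
  simp only [walk, dir, Prod.snd_add] at h₂ h₃
  linarith

lemma walk_of_snd_eq (ht : ∀ k, t k ∈ ({-1, 0, 1} : Set ℤ)) (hstep : ∀ k, |t (k + 1) - t k| ≤ 1)
    {i j : ℕ} (hij : i ≤ j) (hy : (walk t i).2 = (walk t (j + 1)).2) :
    t j = t i ∧ (walk t (j + 1)).1 = (walk t i).1 + (j + 1 - i) * t i := by
  induction j, hij using Nat.le_induction with
  | base => simp [walk, dir]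
  | succ j hij ih =>
    have hy' : (walk t i).2 = (walk t (j + 1)).2 :=
      le_antisymm (walk_snd_monotone ht (by omega)) (hy ▸ walk_snd_monotone ht (by omega))
    obtain ⟨htj, hx⟩ := ih hy'
    have htj' : t (j + 1) = t j := Int.eq_of_sq_eq_one_of_abs_sub_le_one
      (sq_eq_one_of_walk_snd_eq ht (by omega) (by omega) hy)
      (sq_eq_one_of_walk_snd_eq ht hij (by omega) hy) (hstep j)
    refine ⟨htj'.trans htj, ?_⟩
    rw [walk, Prod.fst_add, hx, dir, htj', htj]
    push_cast
    ring

theorem walk_injective (ht : ∀ k, t k ∈ ({-1, 0, 1} : Set ℤ))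
    (hstep : ∀ k, |t (k + 1) - t k| ≤ 1) : Function.Injective (walk t) := by
  intro i j hij
  by_contra hne
  wlog hlt : i < j generalizing i j
  · exact this hij.symm (Ne.symm hne) (by omega)
  obtain ⟨j, rfl⟩ : ∃ j', j = j' + 1 := ⟨j - 1, by omega⟩
  have hy := congrArg Prod.snd hij
  obtain ⟨-, hx⟩ := walk_of_snd_eq ht hstep (Nat.lt_succ_iff.mp hlt) hy
  have hti := sq_eq_one_of_walk_snd_eq ht le_rfl hlt hy
  rw [hij, left_eq_add, mul_eq_zero] at hx
  rcases hx with hx | hx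
  · omega
  · simp [hx] at hti

end Walk

lemma qturn_append (A B : List TurnSym) : qturn (A ++ B) = qturn A + qturn B := by
  simp [qturn]

lemma forall_prefix_append_qturn_mem {S : Set ℤ} {U V : List TurnSym}
    (hU : ∀ P, P <+: U → qturn P ∈ S) (hU0 : qturn U = 0) (hV : ∀ P, P <+: V → qturn P ∈ S) :
    ∀ P, P <+: U ++ V → qturn P ∈ S := by
  intro P hP
  rcases List.prefix_or_prefix_of_prefix hP (List.prefix_append U V) with hPU | ⟨Q, rfl⟩
  · exact hU P hPU
  · rw [qturn_append, hU0, zero_add]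
    exact hV Q ((List.prefix_append_right_inj U).mp hP)

lemma qturn_take_add_one (W : List TurnSym) {k : ℕ} (hk : k < W.length) :
    qturn (W.take (k + 1)) = qturn (W.take k) + qt W[k] := by
  rw [List.take_add_one, List.getElem?_eq_getElem hk, Option.toList_some, qturn_append]
  simp [qturn]

lemma abs_qturn_take_add_one_sub_le (W : List TurnSym) (k : ℕ) :
    |qturn (W.take (k + 1)) - qturn (W.take k)| ≤ 1 := by
  rw [List.take_add_one, qturn_append, add_sub_cancel_left]
  cases W[k]? with
  | none => simp [qturn]
  | some a => cases a <;> simp [qturn, qt]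

lemma rot_dir (a : TurnSym) {t : ℤ} (ht : t ∈ ({-1, 0, 1} : Set ℤ))
    (hta : t + qt a ∈ ({-1, 0, 1} : Set ℤ)) : rot a (dir t) = dir (t + qt a) := by
  rcases ht with rfl | rfl | rfl <;> cases a <;> simp_all [rot, dir, qt]

section Path

variable {W : List TurnSym}

lemma foldl_pathStep_take (hW : ∀ P, P <+: W → qturn P ∈ ({-1, 0, 1} : Set ℤ)) {k : ℕ}
    (hk : k ≤ W.length) :
    (W.take k).foldl pathStep ((0, 1), (0, 1)) =
      (walk (fun i => qturn (W.take i)) (k + 1), dir (qturn (W.take k))) := by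
  induction k with
  | zero => simp [walk, dir, qturn]
  | succ k ih =>
    have hk' : k < W.length := hk
    have hturn := qturn_take_add_one W hk'
    rw [List.take_add_one, List.getElem?_eq_getElem hk', Option.toList_some, List.foldl_append,
      ih hk'.le]
    have hrot := rot_dir W[k] (hW _ (List.take_prefix k W)) (hturn ▸ hW _ (List.take_prefix _ W))
    simp [pathStep, walk, hrot, hturn]

lemma pts_eq_map_walk (hW : ∀ P, P <+: W → qturn P ∈ ({-1, 0, 1} : Set ℤ)) :
    pts W = (List.range (W.length + 2)).map (walk fun k => qturn (W.take k)) := by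
  apply List.ext_getElem
  · simp [pts]
  · intro k h₁ h₂
    cases k with
    | zero => simp [pts, walk]
    | succ k =>
      simp [pts, List.getElem_scanl, foldl_pathStep_take hW (by simp [pts] at h₁; omega)]

theorem pts_nodup (hW : ∀ P, P <+: W → qturn P ∈ ({-1, 0, 1} : Set ℤ)) : (pts W).Nodup := by
  rw [pts_eq_map_walk hW]
  exact List.nodup_range.map <|
    walk_injective (fun k => hW _ (List.take_prefix k W)) (abs_qturn_take_add_one_sub_le W)

end Path

theorem stmt17 (U V : List TurnSym)
    (hU : ∀ P, P <+: U → qturn P ∈ ({-1, 0, 1} : Set ℤ)) (hU0 : qturn U = 0)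
    (hV : ∀ P, P <+: V → qturn P ∈ ({-1, 0, 1} : Set ℤ)) (hV0 : qturn V = 0) :
    (∀ P, P <+: U ++ V → qturn P ∈ ({-1, 0, 1} : Set ℤ)) ∧
    qturn (U ++ V) = 0 ∧
    (pts (U ++ V)).Nodup := by
  have hUV := forall_prefix_append_qturn_mem hU hU0 hV
  exact ⟨hUV, by rw [qturn_append, hU0, hV0, add_zero], pts_nodup hUV⟩
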